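/- Periodic configurations with a frustrated bond have positive energy density: let Φ be a two-body translation-invariant potential of range r on Ω = (ℤ^d → Fin n) with Φ_c(s,t) ≥ 0 for all c, s, t. Suppose X ∈ Ω satisfies τ_{p·e_i} X = X for each standard basis vector e_i (X has period p in every coordinate direction), and suppose there exist distinct sites a, b with Φ_{a−b}(X a, X b) ≥ 1. Then the energy density satisfies e(X) ≥ 1/p^d; in particular e(X) > 0. -/

import Mathlib

open Filter MeasureTheory

namespace QC

/-- A lattice site in `ℤ^d`. -/
abbrev Site (d : ℕ) := Fin d → ℤ

/-- A configuration: an assignment of one of `n` particle types to each site of `ℤ^d`. -/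
abbrev Config (d n : ℕ) := Site d → Fin n

/-- A two-body translation-invariant potential of range `r` on `ℤ^d` with `n` particle types:
`pot c s t` is the energy of a pair of particles of types `s, t` at sites `a, b` with
`a - b = c` (only the values at `c ≠ 0` are ever used). -/
structure Potential (d n : ℕ) (r : ℝ) where
  pot : Site d → Fin n → Fin n → ℝ
  symm : ∀ c s t, pot (-c) t s = pot c s t
  finite_range : ∀ c : Site d, r < ‖c‖ → ∀ s t, pot c s t = 0

variable {d n : ℕ} {r : ℝ}

/-- `Y` is a local excitation of `X` (`Y ~ X`): they differ at finitely many sites. -/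
def Excites (Y X : Config d n) : Prop := {a | Y a ≠ X a}.Finite

/-- The relative Hamiltonian `H(Y,X)`: the sum over unordered pairs of distinct sites of the
difference of pair energies (each unordered pair is counted twice in the ordered sum,
whence the factor `1/2`). -/
noncomputable def relHam (Φ : Potential d n r) (Y X : Config d n) : ℝ :=
  (1 / 2) * ∑ᶠ p : Site d × Site d,
    (if p.1 ≠ p.2 then
      Φ.pot (p.1 - p.2) (Y p.1) (Y p.2) - Φ.pot (p.1 - p.2) (X p.1) (X p.2)
    else 0)

/-- `X` is a ground-state configuration of `Φ`. -/
def IsGroundState (Φ : Potential d n r) (X : Config d n) : Prop :=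
  ∀ Y : Config d n, Excites Y X → 0 ≤ relHam Φ Y X

/-- `H_Λ(X)`: the energy of `X` in the finite region `Λ` (sum over unordered pairs of
distinct sites of `Λ`). -/
noncomputable def boxEnergy (Φ : Potential d n r) (Λ : Finset (Site d)) (X : Config d n) : ℝ :=
  (1 / 2) * ∑ a ∈ Λ, ∑ b ∈ Λ, (if a ≠ b then Φ.pot (a - b) (X a) (X b) else 0)

/-- The box `Λ_l = {-l,…,l}^d`. -/
noncomputable def box (d : ℕ) (l : ℕ) : Finset (Site d) :=
  Fintype.piFinset fun _ => Finset.Icc (-(l : ℤ)) (l : ℤ)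

/-- The energy density `e(X) = liminf_{l→∞} H_{Λ_l}(X)/|Λ_l|`. -/
noncomputable def energyDensity (Φ : Potential d n r) (X : Config d n) : ℝ :=
  liminf (fun l : ℕ => boxEnergy Φ (box d l) X / (box d l).card) atTop

/-- The translation `τ_a`. -/
def translate (a : Site d) (X : Config d n) : Config d n := fun b => X (b - a)

/-- `X` is periodic if it is invariant under some nonzero translation. -/
def IsPeriodic (X : Config d n) : Prop := ∃ a : Site d, a ≠ 0 ∧ translate a X = X

/-- For a `{0,1}`-valued potential: the unordered pair `{a,b}` is a broken bond of `Y`. -/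
def IsBrokenBond (Φ : Potential d n r) (Y : Config d n) (a b : Site d) : Prop :=
  a ≠ b ∧ Φ.pot (a - b) (Y a) (Y b) = 1

/-- `B(Y)`: the number of broken bonds (unordered pairs) of `Y`. -/
noncomputable def brokenCount (Φ : Potential d n r) (Y : Config d n) : ℕ :=
  Nat.card {p : Sym2 (Site d) // ∃ a b : Site d, p = s(a, b) ∧ IsBrokenBond Φ Y a b}

/-- `B_Λ(Y)`: the number of broken bonds of `Y` with both sites in `Λ`. -/
noncomputable def brokenCountIn (Φ : Potential d n r) (Λ : Finset (Site d))
    (Y : Config d n) : ℕ :=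
  Nat.card {p : Sym2 (Site d) //
    ∃ a b : Site d, p = s(a, b) ∧ a ∈ Λ ∧ b ∈ Λ ∧ IsBrokenBond Φ Y a b}

/-- The broken-bond setting: `Φ` takes only the values `0` and `1`, some configuration has no
broken bonds, the ground-state configurations are exactly the configurations without broken
bonds, and consequently `H(Y,X) = B(Y)` for any ground-state configuration `X` and `Y ~ X`. -/
structure BrokenBondSetting (Φ : Potential d n r) : Prop where
  vals : ∀ c s t, Φ.pot c s t = 0 ∨ Φ.pot c s t = 1
  exists_perfect : ∃ X : Config d n, ∀ a b, ¬ IsBrokenBond Φ X a b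
  ground_iff : ∀ X : Config d n, IsGroundState Φ X ↔ ∀ a b, ¬ IsBrokenBond Φ X a b
  relHam_eq : ∀ X Y : Config d n, IsGroundState Φ X → Excites Y X →
    relHam Φ Y X = brokenCount Φ Y

/-- An arrangement: a single particle type, or a pair of particle types at relative
position `c` (the arrangement `pair c s t` is identified with `pair (-c) t s`). -/
inductive Arr (d n : ℕ) where
  | single (s : Fin n) : Arr d n
  | pair (c : Site d) (s t : Fin n) : Arr d n

/-- An arrangement has range `< r` if it is a single particle, or a pair at relative
position `c ≠ 0` with `‖c‖ < r`. -/
def Arr.valid (r : ℝ) : Arr d n → Prop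
  | .single _ => True
  | .pair c _ _ => c ≠ 0 ∧ ‖c‖ < r

/-- The identification `(c,s,t) ↦ (-c,t,s)` of pair arrangements. -/
def Arr.mirror : Arr d n → Arr d n
  | .single s => .single s
  | .pair c s t => .pair (-c) t s

/-- `n_ar(Y,X)`: the difference between the number of occurrences of the arrangement `ar`
in `Y` and in `X` (a finite sum when `Y ~ X`). -/
noncomputable def arrCount (Y X : Config d n) : Arr d n → ℤ
  | .single s => ∑ᶠ a : Site d,
      ((if Y a = s then (1 : ℤ) else 0) - (if X a = s then (1 : ℤ) else 0))
  | .pair c s t => ∑ᶠ a : Site d,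
      ((if Y a = s ∧ Y (a + c) = t then (1 : ℤ) else 0)
        - (if X a = s ∧ X (a + c) = t then (1 : ℤ) else 0))

/-- The strict boundary condition for the arrangement `ar` with constant `C`:
`|n_ar(Y,X)| < C·B(Y)` for every ground-state configuration `X` and every `Y ~ X`. -/
def StrictBoundary (Φ : Potential d n r) (ar : Arr d n) (C : ℝ) : Prop :=
  0 < C ∧ ∀ X Y : Config d n, IsGroundState Φ X → Excites Y X →
    |(arrCount Y X ar : ℝ)| < C * (brokenCount Φ Y : ℝ)

/-- A perturbation of range `< r`: a real number for every arrangement of range `< r`,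
respecting the identification `(c,s,t) ~ (-c,t,s)` and vanishing on arrangements of
range `≥ r`. -/
structure Perturbation (d n : ℕ) (r : ℝ) where
  val : Arr d n → ℝ
  symm : ∀ ar : Arr d n, val ar.mirror = val ar
  finite_range : ∀ ar : Arr d n, ¬ ar.valid r → val ar = 0

/-- `Σ_ar n_ar(Y,X)·Ψ(ar)`, the sum running over arrangements; since each pair arrangement
has exactly two representatives `(c,s,t)` and `(-c,t,s)`, the pair part carries a
factor `1/2`. -/
noncomputable def pertSum (Ψ : Perturbation d n r) (Y X : Config d n) : ℝ :=
  (∑ s : Fin n, (arrCount Y X (.single s) : ℝ) * Ψ.val (.single s))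
    + (1 / 2) * ∑ᶠ c : Site d, ∑ s : Fin n, ∑ t : Fin n,
        (arrCount Y X (.pair c s t) : ℝ) * Ψ.val (.pair c s t)

/-- The perturbed relative Hamiltonian `H''(Y,X) = H(Y,X) + Σ_ar n_ar(Y,X)·Ψ(ar)`. -/
noncomputable def pertHam (Φ : Potential d n r) (Ψ : Perturbation d n r)
    (Y X : Config d n) : ℝ :=
  relHam Φ Y X + pertSum Ψ Y X

/-- `X` is a ground-state configuration of the perturbed Hamiltonian `H'' = H + H'`. -/
def IsPerturbedGroundState (Φ : Potential d n r) (Ψ : Perturbation d n r)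
    (X : Config d n) : Prop :=
  ∀ Y : Config d n, Excites Y X → 0 ≤ pertHam Φ Ψ Y X

/-- `Σ_ar C_ar·|Ψ(ar)|`, the sum running over arrangements (pair arrangements,
having two representatives each, carry a factor `1/2`). -/
noncomputable def weightedNorm (C : Arr d n → ℝ) (Ψ : Perturbation d n r) : ℝ :=
  (∑ s : Fin n, C (.single s) * |Ψ.val (.single s)|)
    + (1 / 2) * ∑ᶠ c : Site d, ∑ s : Fin n, ∑ t : Fin n,
        C (.pair c s t) * |Ψ.val (.pair c s t)|

/-- `Σ_ar |Ψ(ar)|`. -/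
noncomputable def pertNorm (Ψ : Perturbation d n r) : ℝ :=
  weightedNorm (fun _ => (1 : ℝ)) Ψ


section Aux

variable {d n : ℕ}

/-- If `X` is invariant under translation by `p·e_i` for every `i`, then it is invariant
under translation by `p·k` for every `k ∈ ℤ^d`. -/
lemma periodic_smul {p : ℕ} (X : Config d n)
    (hper : ∀ i : Fin d, translate (Pi.single i (p : ℤ)) X = X)
    (k : Site d) (x : Site d) : X (x + (p : ℤ) • k) = X x := by
  let G : AddSubgroup (Site d) :=
    { carrier := {c | ∀ y : Site d, X (y + c) = X y}
      zero_mem' := by intro y; simp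
      add_mem' := by
        intro c c' hc hc' y
        rw [← add_assoc, hc' (y + c), hc y]
      neg_mem' := by
        intro c hc y
        have h := hc (y + -c)
        simp only [add_assoc, neg_add_cancel, add_zero] at h
        exact h.symm }
  have hsingle : ∀ i : Fin d, Pi.single i (p : ℤ) ∈ G := by
    intro i
    show ∀ y : Site d, X (y + Pi.single i (p : ℤ)) = X y
    intro y
    have h := congrFun (hper i) (y + Pi.single i (p : ℤ))
    simp only [translate, add_sub_cancel_right] at h
    exact h.symm
  have hrepr : (p : ℤ) • k = ∑ i : Fin d, k i • Pi.single i (p : ℤ) := by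
    funext j
    rw [Finset.sum_apply]
    simp [Pi.single_apply, mul_ite, Finset.sum_ite_eq, mul_comm]
  have hmem : (p : ℤ) • k ∈ G := by
    rw [hrepr]
    exact AddSubgroup.sum_mem G fun i _ => AddSubgroup.zsmul_mem G (hsingle i) (k i)
  exact hmem x

lemma card_symIcc (d m : ℕ) :
    (Fintype.piFinset fun _ : Fin d => Finset.Icc (-(m : ℤ)) (m : ℤ)).card = (2 * m + 1) ^ d := by
  rw [Fintype.card_piFinset]
  have h : (Finset.Icc (-(m : ℤ)) (m : ℤ)).card = 2 * m + 1 := by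
    rw [Int.card_Icc]; omega
  simp [h]

lemma card_box' (d l : ℕ) : (box d l).card = (2 * l + 1) ^ d := by
  rw [box]; exact card_symIcc d l

end Aux

set_option maxHeartbeats 1600000 in
/-- For a nonnegative potential, a configuration of period `p` in every
coordinate direction containing a pair of distinct sites of energy `≥ 1` has energy
density at least `1/p^d`; in particular its energy density is positive. -/
theorem periodic_frustrated_positive_energyDensity
    {d n : ℕ} (hd : 1 ≤ d) (hn : 1 ≤ n) {r : ℝ} (hr : 0 < r)
    (Φ : Potential d n r) (hpos : ∀ c s t, 0 ≤ Φ.pot c s t)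
    (X : Config d n) (p : ℕ) (hp : 1 ≤ p)
    (hper : ∀ i : Fin d, translate (Pi.single i (p : ℤ)) X = X)
    (hfrus : ∃ a b : Site d, a ≠ b ∧ 1 ≤ Φ.pot (a - b) (X a) (X b)) :
    1 / (p : ℝ) ^ d ≤ energyDensity Φ X ∧ 0 < energyDensity Φ X := by
  classical
  obtain ⟨a₀, b₀, hab, hfr⟩ := hfrus
  have hp0 : (0 : ℝ) < p := by exact_mod_cast hp
  have hpzℤ : ((p : ℤ)) ≠ 0 := by
    have : p ≠ 0 := by omega
    exact_mod_cast this
  -- the pair interaction as a function on ordered pairs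
  set F : Site d × Site d → ℝ :=
    fun pr => if pr.1 ≠ pr.2 then Φ.pot (pr.1 - pr.2) (X pr.1) (X pr.2) else 0 with hFdef
  have hF0 : ∀ pr, 0 ≤ F pr := by
    intro pr
    rw [hFdef]
    dsimp only
    split
    · exact hpos _ _ _
    · exact le_rfl
  -- nonnegativity of box energies
  have hE0 : ∀ l : ℕ, 0 ≤ boxEnergy Φ (box d l) X := by
    intro l
    rw [boxEnergy]
    apply mul_nonneg (by norm_num)
    apply Finset.sum_nonneg; intro u _
    apply Finset.sum_nonneg; intro v _
    split
    · exact hpos _ _ _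
    · exact le_rfl
  have hcardpos : ∀ l : ℕ, (0 : ℝ) < ((box d l).card : ℝ) := by
    intro l
    rw [card_box' d l]
    positivity
  -- a uniform bound for the potential
  set S : Finset (Site d) := Fintype.piFinset fun _ : Fin d => Finset.Icc (-⌈r⌉) ⌈r⌉ with hSdef
  set B : ℝ := ∑ c ∈ S, ∑ s : Fin n, ∑ t : Fin n, Φ.pot c s t with hBdef
  have hB0 : 0 ≤ B := by
    apply Finset.sum_nonneg; intro c _
    apply Finset.sum_nonneg; intro s _
    exact Finset.sum_nonneg fun t _ => hpos c s t
  have hnorm : ∀ c : Site d, c ∉ S → r < ‖c‖ := by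
    intro c hc
    have hex : ∃ i, c i ∉ Finset.Icc (-⌈r⌉) ⌈r⌉ := by
      by_contra h
      push_neg at h
      exact hc (Fintype.mem_piFinset.2 h)
    obtain ⟨i, hi⟩ := hex
    simp only [Finset.mem_Icc, not_and_or, not_le] at hi
    have habs : ⌈r⌉ < |c i| := by
      rcases hi with h | h
      · exact lt_abs.2 (Or.inr (by linarith))
      · exact lt_abs.2 (Or.inl h)
    have h1 : r ≤ (⌈r⌉ : ℝ) := Int.le_ceil r
    have h2 : ((⌈r⌉ : ℤ) : ℝ) < ((|c i| : ℤ) : ℝ) := by exact_mod_cast habs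
    have h3 : ‖c i‖ ≤ ‖c‖ := norm_le_pi_norm c i
    have h4 : ((|c i| : ℤ) : ℝ) = ‖c i‖ := by rw [Int.norm_eq_abs, Int.cast_abs]
    linarith
  have hBle : ∀ c s t, Φ.pot c s t ≤ B := by
    intro c s t
    by_cases hc : c ∈ S
    · calc Φ.pot c s t ≤ ∑ t' : Fin n, Φ.pot c s t' :=
            Finset.single_le_sum (fun t' _ => hpos c s t') (Finset.mem_univ t)
        _ ≤ ∑ s' : Fin n, ∑ t' : Fin n, Φ.pot c s' t' :=
            Finset.single_le_sum
              (f := fun s' => ∑ t' : Fin n, Φ.pot c s' t')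
              (fun s' _ => Finset.sum_nonneg fun t' _ => hpos c s' t') (Finset.mem_univ s)
        _ ≤ B :=
            Finset.single_le_sum
              (f := fun c' => ∑ s' : Fin n, ∑ t' : Fin n, Φ.pot c' s' t')
              (fun c' _ => Finset.sum_nonneg fun s' _ =>
                Finset.sum_nonneg fun t' _ => hpos c' s' t') hc
    · rw [Φ.finite_range c (hnorm c hc) s t]
      exact hB0
  -- uniform upper bound for the energy density sequence (needed for coboundedness)
  have hupper : ∀ l : ℕ, boxEnergy Φ (box d l) X / ((box d l).card : ℝ) ≤ (S.card : ℝ) * B := by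
    intro l
    rw [div_le_iff₀ (hcardpos l)]
    have hinner : ∀ u : Site d,
        ∑ v ∈ box d l, (if u ≠ v then Φ.pot (u - v) (X u) (X v) else 0)
          ≤ (S.card : ℝ) * B := by
      intro u
      calc ∑ v ∈ box d l, (if u ≠ v then Φ.pot (u - v) (X u) (X v) else 0)
          ≤ ∑ v ∈ box d l, (if u - v ∈ S then B else 0) := by
            apply Finset.sum_le_sum
            intro v _
            by_cases hmem : u - v ∈ S
            · rw [if_pos hmem]
              split
              · exact hBle _ _ _
              · exact hB0
            · rw [if_neg hmem]
              split
              · rw [Φ.finite_range (u - v) (hnorm (u - v) hmem)]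
              · exact le_rfl
        _ = ((Finset.filter (fun v => u - v ∈ S) (box d l)).card : ℝ) * B := by
            rw [← Finset.sum_filter, Finset.sum_const, nsmul_eq_mul]
        _ ≤ (S.card : ℝ) * B := by
            apply mul_le_mul_of_nonneg_right _ hB0
            have hcard : (Finset.filter (fun v => u - v ∈ S) (box d l)).card ≤ S.card := by
              apply Finset.card_le_card_of_injOn (fun v => u - v)
              · intro v hv
                exact (Finset.mem_filter.1 hv).2
              · intro v1 _ v2 _ h
                exact sub_right_injective h
            exact_mod_cast hcard
    have hD0 : 0 ≤ ∑ u ∈ box d l, ∑ v ∈ box d l,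
        (if u ≠ v then Φ.pot (u - v) (X u) (X v) else 0) := by
      apply Finset.sum_nonneg; intro u _
      apply Finset.sum_nonneg; intro v _
      split
      · exact hpos _ _ _
      · exact le_rfl
    have hDle : ∑ u ∈ box d l, ∑ v ∈ box d l,
        (if u ≠ v then Φ.pot (u - v) (X u) (X v) else 0)
          ≤ ((box d l).card : ℝ) * ((S.card : ℝ) * B) := by
      calc ∑ u ∈ box d l, ∑ v ∈ box d l, (if u ≠ v then Φ.pot (u - v) (X u) (X v) else 0)
          ≤ ∑ _u ∈ box d l, (S.card : ℝ) * B := Finset.sum_le_sum fun u _ => hinner u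
        _ = ((box d l).card : ℝ) * ((S.card : ℝ) * B) := by
            rw [Finset.sum_const, nsmul_eq_mul]
    rw [boxEnergy]
    nlinarith
  -- bound on the frustrated pair's coordinates
  set M : ℕ := Finset.univ.sup (fun i : Fin d => max (a₀ i).natAbs (b₀ i).natAbs) with hMdef
  have hMa : ∀ i, |a₀ i| ≤ (M : ℤ) := by
    intro i
    have h0 : max (a₀ i).natAbs (b₀ i).natAbs ≤ M := by
      rw [hMdef]
      exact Finset.le_sup (f := fun i : Fin d => max (a₀ i).natAbs (b₀ i).natAbs)
        (Finset.mem_univ i)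
    have h1 : (a₀ i).natAbs ≤ M := le_trans (le_max_left _ _) h0
    rw [Int.abs_eq_natAbs]
    exact_mod_cast h1
  have hMb : ∀ i, |b₀ i| ≤ (M : ℤ) := by
    intro i
    have h0 : max (a₀ i).natAbs (b₀ i).natAbs ≤ M := by
      rw [hMdef]
      exact Finset.le_sup (f := fun i : Fin d => max (a₀ i).natAbs (b₀ i).natAbs)
        (Finset.mem_univ i)
    have h1 : (b₀ i).natAbs ≤ M := le_trans (le_max_right _ _) h0
    rw [Int.abs_eq_natAbs]
    exact_mod_cast h1
  set CC : ℕ := 2 * M + p with hCCdef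
  -- the comparison sequence
  set g : ℕ → ℝ := fun l => ((1 - (CC : ℝ) / (2 * l + 1)) / p) ^ d with hgdef
  have h2l : Tendsto (fun l : ℕ => (2 * (l : ℝ) + 1)) atTop atTop := by
    apply Filter.tendsto_atTop_add_const_right
    exact Filter.Tendsto.const_mul_atTop (by norm_num : (0 : ℝ) < 2) tendsto_natCast_atTop_atTop
  have h0tend : Tendsto (fun l : ℕ => (CC : ℝ) / (2 * l + 1)) atTop (nhds 0) :=
    Filter.Tendsto.div_atTop tendsto_const_nhds h2l
  have htend : Tendsto g atTop (nhds (1 / (p : ℝ) ^ d)) := by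
    have hc : Tendsto (fun _ : ℕ => (1 : ℝ)) atTop (nhds 1) := tendsto_const_nhds
    have h := ((hc.sub h0tend).div_const (p : ℝ)).pow d
    have heq : ((1 - (0 : ℝ)) / p) ^ d = 1 / (p : ℝ) ^ d := by
      rw [sub_zero, div_pow, one_pow]
    rw [heq] at h
    exact h
  -- key eventual lower bound
  have hev : ∀ᶠ l in atTop, g l ≤ boxEnergy Φ (box d l) X / ((box d l).card : ℝ) := by
    filter_upwards [eventually_ge_atTop (M + CC + 1)] with l hl
    have hlM : M ≤ l := by omega
    have hlC : CC ≤ l := by omega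
    set q : ℕ := (l - M) / p with hqdef
    set K : Finset (Site d) := Fintype.piFinset fun _ : Fin d => Finset.Icc (-(q : ℤ)) (q : ℤ)
      with hKdef
    have hp0' : (0 : ℤ) ≤ (p : ℤ) := by positivity
    have hpqle : (q : ℤ) * p ≤ (l : ℤ) - M := by
      have h1 : q * p ≤ l - M := Nat.div_mul_le_self _ _
      have h1' : ((q * p : ℕ) : ℤ) ≤ ((l - M : ℕ) : ℤ) := Int.ofNat_le.2 h1
      push_cast [Nat.cast_sub hlM] at h1'
      exact_mod_cast h1'
    -- translated sites stay in the box
    have hbox : ∀ (y : Site d), (∀ i, |y i| ≤ (M : ℤ)) → ∀ k ∈ K, y + (p : ℤ) • k ∈ box d l := by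
      intro y hy k hk
      rw [box, Fintype.mem_piFinset]
      intro i
      rw [Finset.mem_Icc]
      have hki := Fintype.mem_piFinset.1 hk i
      rw [Finset.mem_Icc] at hki
      have hyi := abs_le.1 (hy i)
      have happ : (y + (p : ℤ) • k) i = y i + (p : ℤ) * k i := rfl
      rw [happ]
      have e1 := mul_le_mul_of_nonneg_left hki.1 hp0'
      have e2 := mul_le_mul_of_nonneg_left hki.2 hp0'
      constructor
      · nlinarith [hyi.1, e1, hpqle]
      · nlinarith [hyi.2, e2, hpqle]
    -- each translated pair is a frustrated pair
    have hne : ∀ k : Site d, a₀ + (p : ℤ) • k ≠ b₀ + (p : ℤ) • k := by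
      intro k h
      exact hab (add_right_cancel h)
    have h1k : ∀ k : Site d, (1 : ℝ) ≤ F (a₀ + (p : ℤ) • k, b₀ + (p : ℤ) • k) := by
      intro k
      rw [hFdef]
      dsimp only
      rw [if_pos (hne k), add_sub_add_right_eq_sub,
        periodic_smul X hper k a₀, periodic_smul X hper k b₀]
      exact hfr
    have h2k : ∀ k : Site d, (1 : ℝ) ≤ F (b₀ + (p : ℤ) • k, a₀ + (p : ℤ) • k) := by
      intro k
      rw [hFdef]
      dsimp only
      rw [if_pos (fun h => hne k h.symm), add_sub_add_right_eq_sub,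
        periodic_smul X hper k a₀, periodic_smul X hper k b₀,
        ← neg_sub a₀ b₀, Φ.symm]
      exact hfr
    -- injectivity of the translated families
    have hsmulinj : Function.Injective (fun k : Site d => (p : ℤ) • k) :=
      smul_right_injective (Site d) hpzℤ
    have hinj : ∀ w : Site d, ∀ x y : Site d, w + (p : ℤ) • x = w + (p : ℤ) • y → x = y := by
      intro w x y h
      exact hsmulinj (add_left_cancel h)
    set T1 : Finset (Site d × Site d) :=
      K.image (fun k => (a₀ + (p : ℤ) • k, b₀ + (p : ℤ) • k)) with hT1def
    set T2 : Finset (Site d × Site d) :=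
      K.image (fun k => (b₀ + (p : ℤ) • k, a₀ + (p : ℤ) • k)) with hT2def
    have hsumT1 : (K.card : ℝ) ≤ ∑ pr ∈ T1, F pr := by
      rw [hT1def, Finset.sum_image (fun x _ y _ h => hinj a₀ x y (congrArg Prod.fst h))]
      calc (K.card : ℝ) = ∑ _k ∈ K, (1 : ℝ) := by simp
        _ ≤ _ := Finset.sum_le_sum fun k _ => h1k k
    have hsumT2 : (K.card : ℝ) ≤ ∑ pr ∈ T2, F pr := by
      rw [hT2def, Finset.sum_image (fun x _ y _ h => hinj b₀ x y (congrArg Prod.fst h))]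
      calc (K.card : ℝ) = ∑ _k ∈ K, (1 : ℝ) := by simp
        _ ≤ _ := Finset.sum_le_sum fun k _ => h2k k
    have hdisj : Disjoint T1 T2 := by
      rw [Finset.disjoint_left]
      intro pr h1 h2
      obtain ⟨k, _, e1⟩ := Finset.mem_image.1 h1
      obtain ⟨k', _, e2⟩ := Finset.mem_image.1 h2
      have h := e1.trans e2.symm
      rw [Prod.mk.injEq] at h
      obtain ⟨ha, hb⟩ := h
      apply hab
      funext i
      have h1i := congrFun ha i
      have h2i := congrFun hb i
      simp only [Pi.add_apply, Pi.smul_apply, smul_eq_mul] at h1i h2i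
      linarith
    have hsub : T1 ∪ T2 ⊆ (box d l) ×ˢ (box d l) := by
      apply Finset.union_subset
      · rw [hT1def, Finset.image_subset_iff]
        intro k hk
        rw [Finset.mem_product]
        exact ⟨hbox a₀ hMa k hk, hbox b₀ hMb k hk⟩
      · rw [hT2def, Finset.image_subset_iff]
        intro k hk
        rw [Finset.mem_product]
        exact ⟨hbox b₀ hMb k hk, hbox a₀ hMa k hk⟩
    -- energy lower bound for the box
    have hEnergy : (K.card : ℝ) ≤ boxEnergy Φ (box d l) X := by
      rw [boxEnergy]
      have hsplit : ∑ u ∈ box d l, ∑ v ∈ box d l,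
          (if u ≠ v then Φ.pot (u - v) (X u) (X v) else 0)
            = ∑ pr ∈ (box d l) ×ˢ (box d l), F pr := by
        rw [Finset.sum_product, hFdef]
      rw [hsplit]
      have hTsum : (K.card : ℝ) + (K.card : ℝ) ≤ ∑ pr ∈ T1 ∪ T2, F pr := by
        rw [Finset.sum_union hdisj]
        exact add_le_add hsumT1 hsumT2
      have hmono : ∑ pr ∈ T1 ∪ T2, F pr ≤ ∑ pr ∈ (box d l) ×ˢ (box d l), F pr :=
        Finset.sum_le_sum_of_subset_of_nonneg hsub (fun pr _ _ => hF0 pr)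
      linarith
    -- the key counting inequality
    have hkey : (2 * (l : ℝ) + 1) - (CC : ℝ) ≤ (2 * (q : ℝ) + 1) * p := by
      have h2 : l - M + 1 ≤ (q + 1) * p := by
        have hmod : (l - M) % p < p := Nat.mod_lt _ (by omega)
        have hdm : p * q + (l - M) % p = l - M := Nat.div_add_mod _ _
        calc l - M + 1 = p * q + (l - M) % p + 1 := by rw [hdm]
          _ ≤ p * q + p := by omega
          _ = (q + 1) * p := by ring
      have h2' : (l : ℝ) - (M : ℝ) + 1 ≤ ((q : ℝ) + 1) * p := by
        have h2'' : ((l - M + 1 : ℕ) : ℝ) ≤ (((q + 1) * p : ℕ) : ℝ) := by exact_mod_cast h2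
        rw [Nat.cast_add, Nat.cast_sub hlM] at h2''
        push_cast at h2''
        linarith
      have hCC' : (CC : ℝ) = 2 * (M : ℝ) + (p : ℝ) := by rw [hCCdef]; push_cast; ring
      have hp1 : (1 : ℝ) ≤ (p : ℝ) := by exact_mod_cast hp
      nlinarith [h2', hCC', hp1]
    -- put the bounds together
    have hden : (0 : ℝ) < 2 * (l : ℝ) + 1 := by positivity
    have h0base : 0 ≤ (1 - (CC : ℝ) / (2 * l + 1)) / p := by
      apply div_nonneg _ (le_of_lt hp0)
      rw [sub_nonneg, div_le_one hden]
      have : (CC : ℝ) ≤ (l : ℝ) := by exact_mod_cast hlC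
      linarith
    have hbase : (1 - (CC : ℝ) / (2 * l + 1)) / p ≤ (2 * (q : ℝ) + 1) / (2 * l + 1) := by
      rw [div_le_div_iff₀ hp0 hden]
      have e : (1 - (CC : ℝ) / (2 * l + 1)) * (2 * l + 1) = (2 * (l : ℝ) + 1) - CC := by
        field_simp
      rw [e]
      exact hkey
    have hfrac : g l ≤ (K.card : ℝ) / ((box d l).card : ℝ) := by
      rw [hKdef, card_symIcc d q, card_box' d l, hgdef]
      push_cast
      rw [← div_pow]
      exact pow_le_pow_left₀ h0base hbase d
    calc g l ≤ (K.card : ℝ) / ((box d l).card : ℝ) := hfrac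
      _ ≤ boxEnergy Φ (box d l) X / ((box d l).card : ℝ) :=
        (div_le_div_iff_of_pos_right (hcardpos l)).2 hEnergy
  -- conclude via liminf comparison
  have hliminf_g : liminf g atTop = 1 / (p : ℝ) ^ d := htend.liminf_eq
  have hmain : 1 / (p : ℝ) ^ d ≤ energyDensity Φ X := by
    rw [energyDensity, ← hliminf_g]
    exact Filter.liminf_le_liminf hev htend.isBoundedUnder_ge
      (Filter.IsBoundedUnder.isCoboundedUnder_ge
        (Filter.isBoundedUnder_of ⟨(S.card : ℝ) * B, fun l => hupper l⟩))
  refine ⟨hmain, lt_of_lt_of_le (by positivity) hmain⟩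

end QC
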